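/- Let Σ = {a, b}, let (n_j)_{j≥1} be a sequence of integers with n_j ≥ 2, and define α₀ = a, β₀ = b, α_{j+1} = (α_j² β_j)^{n_{j+1}}, β_{j+1} = (β_j² α_j)^{n_{j+1}}. Let N_k = |α_k|. Then for any k ≥ 0, the word α_{k+1} does not contain β_k³ (the cube of β_k) as a factor. -/

import Mathlib

/-!
Write `α = α_k`, `β = β_k` and `m = n_{k+1}`, so that `α_{k+1} = (α α β)^m`. A factor of
`(α α β)^m` of length `|α α β| = 3 N_k` is already a factor of `(α α β)²`, hence a rotation of
`α α β`, and so has the same number of letters `b` as `α α β`. But `β` contains strictly more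
letters `b` than `α` (induction on `k`), so `β β β` contains more than `α α β`.
-/

mutual
/-- The word `α_j` over `{a, b}` (with `a := true`, `b := false`):
`α₀ = a`, `α_{j+1} = (α_j α_j β_j)^{n_{j+1}}`. -/
def wordA (n : ℕ → ℕ) : ℕ → List Bool
  | 0 => [true]
  | j + 1 => (List.replicate (n (j + 1)) (wordA n j ++ wordA n j ++ wordB n j)).flatten

/-- The word `β_j`: `β₀ = b`, `β_{j+1} = (β_j β_j α_j)^{n_{j+1}}`. -/
def wordB (n : ℕ → ℕ) : ℕ → List Bool
  | 0 => [false]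
  | j + 1 => (List.replicate (n (j + 1)) (wordB n j ++ wordB n j ++ wordA n j)).flatten
end

/-- `N_k = ∏_{j=1}^k (3 n_j)`, the common length of `α_k` and `β_k`. -/
def Nlen (n : ℕ → ℕ) (k : ℕ) : ℕ := ∏ j ∈ Finset.Icc 1 k, 3 * n j

namespace List

variable {α : Type*} {s w : List α}

theorem prefix_of_prefix_flatten_replicate {m : ℕ} (h : s <+: (replicate m w).flatten)
    (hs : s.length ≤ w.length) : s <+: w := by
  cases m with
  | zero => simp_all
  | succ m =>
    rw [replicate_succ, flatten_cons] at h
    exact prefix_of_prefix_length_le h (prefix_append w _) hs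

theorem infix_append_self_of_infix_flatten_replicate {m : ℕ}
    (h : s <:+: (replicate m w).flatten) (hs : s.length ≤ w.length) : s <:+: w ++ w := by
  induction m with
  | zero => simp_all
  | succ m ih =>
    rw [replicate_succ, flatten_cons, infix_append_iff] at h
    rcases h with h | h | ⟨l₁, l₂, rfl, hl₁, hl₂⟩
    · exact infix_append_of_infix_left h
    · exact ih h
    · have hl₂w : l₂ <+: w :=
        prefix_of_prefix_flatten_replicate hl₂ ((suffix_append l₁ l₂).length_le.trans hs)
      exact infix_append_iff.mpr (Or.inr (Or.inr ⟨l₁, l₂, rfl, hl₁, hl₂w⟩))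

theorem isRotated_of_infix_append_self (h : s <:+: w ++ w) (hs : s.length = w.length) :
    s ~r w := by
  rw [infix_append_iff] at h
  rcases h with h | h | ⟨l₁, l₂, rfl, ⟨p, hp⟩, ⟨q, hq⟩⟩
  · rw [h.eq_of_length hs]
  · rw [h.eq_of_length hs]
  · have hlen : p.length = l₂.length := by
      have hw := congrArg length hp
      simp only [length_append] at hw hs
      omega
    obtain ⟨rfl, rfl⟩ := append_inj (hp.trans hq.symm) hlen
    rw [← hp]
    exact isRotated_append

theorem count_flatten_replicate [BEq α] (x : α) (m : ℕ) (w : List α) :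
    (replicate m w).flatten.count x = m * w.count x := by
  simp [count_flatten]

end List

theorem length_wordA_eq_length_wordB (n : ℕ → ℕ) (k : ℕ) :
    (wordA n k).length = (wordB n k).length := by
  induction k with
  | zero => rfl
  | succ k ih => simp [wordA, wordB, ih]

theorem count_false_wordA_lt_count_false_wordB (n : ℕ → ℕ) (hn : ∀ j, 1 ≤ j → 0 < n j)
    (k : ℕ) : (wordA n k).count false < (wordB n k).count false := by
  induction k with
  | zero => simp [wordA, wordB]
  | succ k ih =>
    simp only [wordA, wordB, List.count_flatten_replicate, List.count_append]
    exact Nat.mul_lt_mul_of_pos_left (by omega) (hn (k + 1) (by omega))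

/-- `α_{k+1}` does not contain the cube `β_k³ = β_k β_k β_k` as a factor. -/
theorem stmt6 (n : ℕ → ℕ) (hn : ∀ j, 1 ≤ j → 2 ≤ n j) (k : ℕ) :
    ¬ (wordB n k ++ wordB n k ++ wordB n k) <:+: wordA n (k + 1) := by
  intro h
  set a := wordA n k
  set b := wordB n k
  have hlen : (b ++ b ++ b).length = (a ++ a ++ b).length := by
    simp [a, b, length_wordA_eq_length_wordB]
  have hrot : b ++ b ++ b ~r a ++ a ++ b :=
    List.isRotated_of_infix_append_self
      (List.infix_append_self_of_infix_flatten_replicate h hlen.le) hlen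
  have hcount := hrot.perm.count_eq false
  have hlt : a.count false < b.count false :=
    count_false_wordA_lt_count_false_wordB n (fun j hj => zero_lt_two.trans_le (hn j hj)) k
  simp only [List.count_append] at hcount
  omega
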